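/- The face F_D := {f ∈ P : no monomial of f involves the variable x} (the nonnegative quartics lying in ℝ[y,z]) is not exposed: there is no linear functional L : H₄ → ℝ with L(h) ≥ 0 for all h ∈ P and F_D = {h ∈ P : L(h) = 0}. -/
import Mathlib


open MvPolynomial

noncomputable section

/-- The space of ternary (3-variable) real polynomials. `H d` corresponds to the
homogeneous polynomials of degree `d` via the predicate `IsHomogeneous`. -/
abbrev MvP : Type := MvPolynomial (Fin 3) ℝ

/-- The cone `P` of nonnegative ternary quartics. -/
def Pcone : Set MvP :=
  {f | f.IsHomogeneous 4 ∧ ∀ a : Fin 3 → ℝ, 0 ≤ eval a f}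

/-- `F` is a face of the cone `P`. -/
def IsFace (F : Set MvP) : Prop :=
  F ⊆ Pcone ∧
  (∀ a ∈ F, ∀ b ∈ F, a + b ∈ F) ∧
  (∀ c : ℝ, 0 ≤ c → ∀ a ∈ F, c • a ∈ F) ∧
  (∀ a ∈ Pcone, ∀ b ∈ Pcone, a + b ∈ F → a ∈ F ∧ b ∈ F)

/-- `J_F = {q ∈ H₂ : q² ∈ F}`. -/
def Jset (F : Set MvP) : Set MvP :=
  {q | q.IsHomogeneous 2 ∧ q ^ 2 ∈ F}

/-- `F` is an exposed face of `P`. -/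
def ExposedFace (F : Set MvP) : Prop :=
  ∃ L : MvP →ₗ[ℝ] ℝ, (∀ h ∈ Pcone, 0 ≤ L h) ∧ F = {h ∈ Pcone | L h = 0}

/-- The face `F_D`: nonnegative quartics in which the variable `x = X 0` does not occur. -/
def FD : Set MvP := {f ∈ Pcone | ∀ d ∈ f.support, d 0 = 0}

lemma y4_mem_Pcone : ((X 1 : MvP) ^ 4) ∈ Pcone := by
  constructor
  · simpa using (isHomogeneous_X ℝ (1 : Fin 3)).pow 4
  · intro a
    simp only [eval_pow, eval_X]
    positivity

lemma x4_mem_Pcone : ((X 0 : MvP) ^ 4) ∈ Pcone := by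
  constructor
  · simpa using (isHomogeneous_X ℝ (0 : Fin 3)).pow 4
  · intro a
    simp only [eval_pow, eval_X]
    positivity

lemma x2y2_mem_Pcone : ((X 0 : MvP) ^ 2 * (X 1) ^ 2) ∈ Pcone := by
  constructor
  · simpa using ((isHomogeneous_X ℝ (0 : Fin 3)).pow 2).mul
      ((isHomogeneous_X ℝ (1 : Fin 3)).pow 2)
  · intro a
    simp only [eval_mul, eval_pow, eval_X]
    positivity

lemma sq_mem_Pcone (t : ℝ) :
    (((X 1 : MvP) ^ 2 - C t * (X 0) ^ 2) ^ 2) ∈ Pcone := by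
  constructor
  · have h : ((X 1 : MvP) ^ 2 - C t * (X 0) ^ 2).IsHomogeneous 2 := by
      have h1 : ((X 1 : MvP) ^ 2).IsHomogeneous 2 := by
        simpa using (isHomogeneous_X ℝ (1 : Fin 3)).pow 2
      have h2 : ((C t : MvP) * (X 0) ^ 2).IsHomogeneous 2 := by
        simpa using (isHomogeneous_C _ t).mul ((isHomogeneous_X ℝ (0 : Fin 3)).pow 2)
      exact h1.sub h2
    simpa using h.pow 2
  · intro a
    simp only [eval_pow, eval_sub, eval_mul, eval_C, eval_X]
    positivity

/-- the face `F_D` of `P` is not exposed. -/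
theorem stmt_19 : ¬ ExposedFace FD := by
  rintro ⟨L, hL, hF⟩
  set x : MvP := X 0 with hx
  set y : MvP := X 1 with hy
  -- y⁴ ∈ FD, hence L(y⁴) = 0
  have hy4F : (y ^ 4 : MvP) ∈ FD := by
    refine ⟨y4_mem_Pcone, ?_⟩
    intro d hd
    have : d = Finsupp.single (1 : Fin 3) 4 := by
      rw [hy, X_pow_eq_monomial] at hd
      simpa [support_monomial] using hd
    simp [this]
  have hLy4 : L (y ^ 4) = 0 := by
    have := hF ▸ hy4F
    exact this.2
  -- expand L on the square family
  set A : ℝ := L (x ^ 2 * y ^ 2) with hA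
  set B : ℝ := L (x ^ 4) with hB
  have hBnn : 0 ≤ B := hL _ x4_mem_Pcone
  have hAnn : 0 ≤ A := hL _ x2y2_mem_Pcone
  have key : ∀ t : ℝ, 0 ≤ -2 * t * A + t ^ 2 * B := by
    intro t
    have hmem := hL _ (sq_mem_Pcone t)
    have hexp : ((y : MvP) ^ 2 - C t * x ^ 2) ^ 2
        = y ^ 4 + (-(2 * t)) • (x ^ 2 * y ^ 2) + (t ^ 2) • (x ^ 4) := by
      rw [smul_eq_C_mul, smul_eq_C_mul]
      push_cast [map_neg, map_mul, map_pow, map_ofNat]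
      ring
    rw [hexp, map_add, map_add, map_smul, map_smul, hLy4] at hmem
    simp only [smul_eq_mul] at hmem
    rw [← hA, ← hB] at hmem
    nlinarith [hmem]
  -- deduce A ≤ 0
  have hAle : A ≤ 0 := by
    by_contra h
    push_neg at h
    have hpos : 0 < 2 * B + 1 := by linarith
    set t : ℝ := A / (2 * B + 1) with htdef
    have ht := key t
    have htpos : 0 < t := div_pos h hpos
    have h1 : t * (2 * B + 1) = A := div_mul_cancel₀ _ (ne_of_gt hpos)
    nlinarith [ht, h1, mul_pos htpos htpos, mul_nonneg htpos.le hBnn,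
      mul_le_mul_of_nonneg_left h1.ge (le_of_lt htpos)]
  have hA0 : A = 0 := le_antisymm hAle hAnn
  -- hence x²y² ∈ FD, contradiction
  have hmemF : (x ^ 2 * y ^ 2 : MvP) ∈ FD := by
    rw [hF]
    exact ⟨x2y2_mem_Pcone, by rw [← hA]; exact hA0⟩
  have hd : (Finsupp.single (0 : Fin 3) 2 + Finsupp.single (1 : Fin 3) 2)
      ∈ (x ^ 2 * y ^ 2 : MvP).support := by
    rw [hx, hy, X_pow_eq_monomial, X_pow_eq_monomial, monomial_mul]
    simp [support_monomial]
  have := hmemF.2 _ hd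
  simp at this
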